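/- arXiv:2207.08167 — 2 statements merged into one kernel-verified Lean document; each statement's English description precedes it below -/
import Mathlib

section
/- Sobolev-critical coercivity estimate: let $N\ge3$, $p = 2^* = 2N/(N-2)$, and let $R_0>0$ satisfy $\tfrac12 - \tfrac{\eta}{2^*}S^{-2^*/2}R_0^{2^*-2} - \tfrac1q h_{\max}C_{N,q}^q a^{q(1-\gamma_q)}R_0^{q\gamma_q-2} = 0$ (i.e. $w_a(R_0)=0$). If $v\in H^1(\mathbb{R}^N)$ with $\|\nabla v\|_2 \le R_0$, then $\tfrac12\|\nabla v\|_2^2 - \tfrac{\eta}{2^*}\|v\|_{2^*}^{2^*} \ge \|\nabla v\|_2^2 \cdot \tfrac1q h_{\max}C_{N,q}^q a^{q(1-\gamma_q)}R_0^{q\gamma_q - 2}$. -/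
/-- Sobolev-critical coercivity estimate. Let `N ≥ 3`,
`p = 2* = 2N/(N-2)`, and let `R₀ > 0` satisfy `w_a(R₀) = 0`, i.e.
`1/2 - (η/2*) S^(-2*/2) R₀^(2*-2) - (1/q) hmax C_q^q a^(q(1-γ_q)) R₀^(qγ_q-2) = 0`.
If `v ∈ H¹` has `‖∇v‖₂ ≤ R₀`, then (encoding `G = ‖∇v‖₂` and
`P = ‖v‖_{2*}^{2*} ≤ S^(-2*/2) G^{2*}` via the Sobolev inequality)
`(1/2) G² - (η/2*) P ≥ G² · (1/q) hmax C_q^q a^(q(1-γ_q)) R₀^(qγ_q-2)`. -/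
theorem stmt14 (N : ℕ) (hN : 3 ≤ N)
    (p q γq a η hmax Cq S R₀ : ℝ)
    (hp : p = 2 * (N : ℝ) / ((N : ℝ) - 2))
    (hq : 2 < q) (hγq : γq = (N : ℝ) / 2 - (N : ℝ) / q)
    (hqγq : q * γq < 2)
    (ha : 0 < a) (hη : 0 < η) (hhmax : 0 < hmax) (hCq : 0 < Cq) (hS : 0 < S)
    (hR₀ : 0 < R₀)
    (hwzero : 1 / 2 - (η / p) * S ^ (-(p / 2)) * R₀ ^ (p - 2)
        - (1 / q) * hmax * Cq ^ q * a ^ (q * (1 - γq)) * R₀ ^ (q * γq - 2) = 0)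
    (G P : ℝ) (hG0 : 0 ≤ G) (hP0 : 0 ≤ P)
    (hSob : P ≤ S ^ (-(p / 2)) * G ^ p)
    (hGR : G ≤ R₀) :
    G ^ (2 : ℝ) * ((1 / q) * hmax * Cq ^ q * a ^ (q * (1 - γq)) * R₀ ^ (q * γq - 2))
      ≤ 1 / 2 * G ^ (2 : ℝ) - (η / p) * P := by
  have hN3 : (3:ℝ) ≤ (N:ℝ) := by exact_mod_cast hN
  have hNm2 : 0 < (N:ℝ) - 2 := by linarith
  have hp2 : 2 < p := by
    rw [hp, lt_div_iff₀ hNm2]; linarith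
  have hppos : 0 < p := by linarith
  set A := (η / p) * S ^ (-(p / 2)) with hA
  set K := (1 / q) * hmax * Cq ^ q * a ^ (q * (1 - γq)) * R₀ ^ (q * γq - 2) with hK
  have hAnn : 0 ≤ A := by positivity
  have hGp : G ^ p ≤ G ^ (2:ℝ) * R₀ ^ (p - 2) := by
    have h1 : G ^ p = G ^ (2:ℝ) * G ^ (p - 2) := by
      rw [← Real.rpow_add' hG0 (by norm_num; linarith)]
      norm_num
    rw [h1]
    exact mul_le_mul_of_nonneg_left
      (Real.rpow_le_rpow hG0 hGR (by linarith)) (by positivity)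
  have hAP : (η / p) * P ≤ A * G ^ p := by
    have := mul_le_mul_of_nonneg_left hSob (le_of_lt (div_pos hη hppos))
    calc (η / p) * P ≤ (η / p) * (S ^ (-(p / 2)) * G ^ p) := this
      _ = A * G ^ p := by ring
  have h2 : A * G ^ p ≤ A * (G ^ (2:ℝ) * R₀ ^ (p - 2)) :=
    mul_le_mul_of_nonneg_left hGp hAnn
  have hhalf : 1 / 2 = A * R₀ ^ (p - 2) + K := by linarith
  have hG2 : 0 ≤ G ^ (2:ℝ) := by positivity
  have key : 1 / 2 * G ^ (2:ℝ) = A * (G ^ (2:ℝ) * R₀ ^ (p - 2)) + K * G ^ (2:ℝ) := by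
    rw [hhalf]; ring
  linarith [h2, hAP, key]
end

section
/- Vanishing exclusion: let $\{u_n\}\subset S(a_1)$ be a minimizing sequence for $\Upsilon_{\mu,T,a_1} < 0$ with $\|\nabla u_n\|_2 < R_0$, and suppose $\|u_n\|_t \to 0$ for all $t\in(2,2^*)$ (vanishing). Then in the subcritical case $p<2^*$ one has $\liminf J_{\mu,T}(u_n) \ge 0$, and in the critical case $p = 2^*$ (under condition (2.4)) one has $J_{\mu,T}(u_n) \ge \kappa \|\nabla u_n\|_2^2 + o(1)$ with $\kappa = \tfrac1q h_{\max}C_{N,q}^q a^{q(1-\gamma_q)}R_0^{q\gamma_q-2} > 0$; either way this contradicts $\Upsilon_{\mu,T,a_1}<0$, so vanishing cannot occur. -/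
open Filter

lemma aux_liminf (J g : ℕ → ℝ) (hle : ∀ n, g n ≤ J n)
    (hg : Tendsto g atTop (nhds 0)) : 0 ≤ liminf J atTop := by
  rw [liminf_eq]
  set S := {a : ℝ | ∀ᶠ n in atTop, a ≤ J n} with hS
  by_cases hb : BddAbove S
  · have hmem : ∀ ε : ℝ, 0 < ε → -ε ∈ S := by
      intro ε hε
      have h1 : ∀ᶠ n in atTop, -ε ≤ g n :=
        hg.eventually (eventually_ge_nhds (show -ε < 0 by linarith))
      exact h1.mono fun n hn => le_trans hn (hle n)
    by_contra h0
    push_neg at h0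
    have := le_csSup hb (hmem (-(sSup S)/2) (by linarith))
    linarith
  · rw [Real.sSup_of_not_bddAbove hb]


/-- vanishing exclusion. Let `{u_n} ⊂ S(a₁)` be a minimizing
sequence for `Υ_{μ,T,a₁} < 0` with `‖∇u_n‖₂ < R₀` (encoded via
`G n = ‖∇u_n‖₂`, `Q n = ‖u_n‖_q^q`, `P n = ‖u_n‖_p^p`,
`J n = J_{μ,T}(u_n) = ½ G² - (μ/q) Q - (η/p) τ(G) P`), and suppose vanishing
holds, i.e. `‖u_n‖_t → 0` for `t ∈ (2,2*)`, so `Q n → 0` (and `P n → 0` in the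
subcritical case). Then: subcritically, `liminf J n ≥ 0`; critically (with the
Sobolev inequality and `w_a(R₀)=0`, condition (2.4) implicit),
`J n ≥ κ G n² - (μ/q) Q n` with `κ = (1/q) h_max C_q^q a^{q(1-γ_q)} R₀^{qγ_q-2} > 0`;
either way `J n → Υ < 0` is impossible, so vanishing cannot occur. -/
theorem stmt18 (N : ℕ) (hN : 1 ≤ N) (p q γq a η μ hmax Cq Sc R₀ Υ κ : ℝ)
    (τ : ℝ → ℝ)
    (hq : 2 < q) (hq2 : q < 2 + 4 / (N : ℝ)) (hp : 2 + 4 / (N : ℝ) < p)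
    (hγq : γq = (N : ℝ) / 2 - (N : ℝ) / q)
    (ha : 0 < a) (hη : 0 < η) (hμ : 0 < μ) (hμmax : μ ≤ hmax)
    (hCq : 0 < Cq) (hSc : 0 < Sc) (hR₀ : 0 < R₀)
    (hκ : κ = 1 / q * hmax * Cq ^ q * a ^ (q * (1 - γq)) * R₀ ^ (q * γq - 2))
    (hτ : ∀ r, 0 ≤ τ r ∧ τ r ≤ 1)
    (G Q P J : ℕ → ℝ)
    (hG : ∀ n, 0 ≤ G n ∧ G n < R₀)
    (hQ0 : ∀ n, 0 ≤ Q n) (hP0 : ∀ n, 0 ≤ P n)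
    (hJ : ∀ n, J n = 1 / 2 * (G n) ^ (2 : ℝ) - μ / q * Q n
      - η / p * τ (G n) * P n)
    (hQlim : Tendsto Q atTop (nhds 0))
    (hΥ : Υ < 0) :
    ((N ≤ 2 ∨ p < 2 * (N : ℝ) / ((N : ℝ) - 2)) →
        Tendsto P atTop (nhds 0) → 0 ≤ liminf J atTop) ∧
    (3 ≤ N → p = 2 * (N : ℝ) / ((N : ℝ) - 2) →
        (∀ n, P n ≤ Sc ^ (-(p / 2)) * (G n) ^ p) →
        1 / 2 - η / p * Sc ^ (-(p / 2)) * R₀ ^ (p - 2) = κ →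
        ∀ n, κ * (G n) ^ (2 : ℝ) - μ / q * Q n ≤ J n) ∧
    ((((N ≤ 2 ∨ p < 2 * (N : ℝ) / ((N : ℝ) - 2)) ∧ Tendsto P atTop (nhds 0)) ∨
        (3 ≤ N ∧ p = 2 * (N : ℝ) / ((N : ℝ) - 2) ∧
          (∀ n, P n ≤ Sc ^ (-(p / 2)) * (G n) ^ p) ∧
          1 / 2 - η / p * Sc ^ (-(p / 2)) * R₀ ^ (p - 2) = κ)) →
      ¬ Tendsto J atTop (nhds Υ)) := by
  have hNpos : (0 : ℝ) < (N : ℝ) := by exact_mod_cast hN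
  have h4N : (0:ℝ) < 4 / (N : ℝ) := by positivity
  have hp2 : 2 < p := by linarith
  have hppos : 0 < p := by linarith
  have hqpos : 0 < q := by linarith
  -- common lower bound lemma usage
  have hκpos : 0 < κ := by
    rw [hκ]
    have h1 : 0 < hmax := lt_of_lt_of_le hμ hμmax
    have : (0:ℝ) < Cq ^ q := Real.rpow_pos_of_pos hCq q
    have : (0:ℝ) < a ^ (q * (1 - γq)) := Real.rpow_pos_of_pos ha _
    have : (0:ℝ) < R₀ ^ (q * γq - 2) := Real.rpow_pos_of_pos hR₀ _
    positivity
  have part1 : (N ≤ 2 ∨ p < 2 * (N : ℝ) / ((N : ℝ) - 2)) →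
      Tendsto P atTop (nhds 0) → 0 ≤ liminf J atTop := by
    intro _ hPlim
    refine aux_liminf J (fun n => -(μ / q * Q n) - η / p * P n) (fun n => ?_) ?_
    · show -(μ / q * Q n) - η / p * P n ≤ J n
      rw [hJ n]
      have hg2 : 0 ≤ (G n) ^ (2:ℝ) := Real.rpow_nonneg (hG n).1 2
      have hτn := hτ (G n)
      have hPn := hP0 n
      have h1 : η / p * τ (G n) * P n ≤ η / p * P n := by
        have : τ (G n) * P n ≤ 1 * P n :=
          mul_le_mul_of_nonneg_right hτn.2 hPn
        have h2 : η / p * (τ (G n) * P n) ≤ η / p * (1 * P n) :=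
          mul_le_mul_of_nonneg_left this (by positivity)
        nlinarith
      linarith
    · have : Tendsto (fun n => -(μ / q * Q n) - η / p * P n) atTop
          (nhds (-(μ / q * 0) - η / p * 0)) :=
        ((hQlim.const_mul (μ / q)).neg).sub (hPlim.const_mul (η / p))
      simpa using this
  have part2 : 3 ≤ N → p = 2 * (N : ℝ) / ((N : ℝ) - 2) →
      (∀ n, P n ≤ Sc ^ (-(p / 2)) * (G n) ^ p) →
      1 / 2 - η / p * Sc ^ (-(p / 2)) * R₀ ^ (p - 2) = κ →
      ∀ n, κ * (G n) ^ (2 : ℝ) - μ / q * Q n ≤ J n := by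
    intro _ _ hSob heq n
    rw [hJ n]
    set g := G n with hgdef
    have hg0 : 0 ≤ g := (hG n).1
    have hgR : g < R₀ := (hG n).2
    have hScp : (0:ℝ) < Sc ^ (-(p/2)) := Real.rpow_pos_of_pos hSc _
    have hRp : (0:ℝ) < R₀ ^ (p - 2) := Real.rpow_pos_of_pos hR₀ _
    have hkey : g ^ p ≤ R₀ ^ (p - 2) * g ^ (2:ℝ) := by
      rcases eq_or_lt_of_le hg0 with h0 | hpos
      · rw [← h0, Real.zero_rpow (by linarith : p ≠ 0),
          Real.zero_rpow (by norm_num : (2:ℝ) ≠ 0), mul_zero]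
      · have h1 : g ^ p = g ^ (p - 2) * g ^ (2:ℝ) := by
          rw [← Real.rpow_add hpos]; ring_nf
        have h2 : g ^ (p - 2) ≤ R₀ ^ (p - 2) :=
          Real.rpow_le_rpow hg0 hgR.le (by linarith)
        rw [h1]
        exact mul_le_mul_of_nonneg_right h2 (Real.rpow_nonneg hg0 2)
    have hτn := hτ g
    have hPn := hP0 n
    have hchain : τ g * P n ≤ Sc ^ (-(p/2)) * (R₀ ^ (p - 2) * g ^ (2:ℝ)) := by
      calc τ g * P n ≤ 1 * P n := mul_le_mul_of_nonneg_right hτn.2 hPn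
        _ = P n := one_mul _
        _ ≤ Sc ^ (-(p/2)) * g ^ p := hSob n
        _ ≤ Sc ^ (-(p/2)) * (R₀ ^ (p - 2) * g ^ (2:ℝ)) :=
            mul_le_mul_of_nonneg_left hkey hScp.le
    have hmul : η / p * (τ g * P n) ≤
        η / p * (Sc ^ (-(p/2)) * (R₀ ^ (p - 2) * g ^ (2:ℝ))) :=
      mul_le_mul_of_nonneg_left hchain (by positivity)
    have heq2 : κ * g ^ (2:ℝ) =
        1 / 2 * g ^ (2:ℝ) - η / p * Sc ^ (-(p/2)) * R₀ ^ (p - 2) * g ^ (2:ℝ) := by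
      rw [← heq]; ring
    have h3 : η / p * τ g * P n ≤
        η / p * Sc ^ (-(p/2)) * R₀ ^ (p - 2) * g ^ (2:ℝ) := by linarith [hmul]
    linarith [heq2, h3]
  refine ⟨part1, part2, ?_⟩
  rintro (⟨hsub, hPlim⟩ | ⟨hN3, hpc, hSob, heq⟩) hJlim
  · have h0 := part1 hsub hPlim
    have : liminf J atTop = Υ := hJlim.liminf_eq
    linarith
  · have hpt := part2 hN3 hpc hSob heq
    have h0 : 0 ≤ liminf J atTop := by
      refine aux_liminf J (fun n => -(μ / q * Q n)) (fun n => ?_) ?_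
      · show -(μ / q * Q n) ≤ J n
        have := hpt n
        have hg2 : 0 ≤ κ * (G n) ^ (2:ℝ) :=
          mul_nonneg hκpos.le (Real.rpow_nonneg (hG n).1 2)
        linarith
      · have : Tendsto (fun n => -(μ / q * Q n)) atTop (nhds (-(μ / q * 0))) :=
          (hQlim.const_mul (μ / q)).neg
        simpa using this
    have : liminf J atTop = Υ := hJlim.liminf_eq
    linarith
end
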